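/- arXiv:1906.09977 — 4 statements merged into one kernel-verified Lean document; each statement's English description precedes it below -/
import Mathlib

section
/- For positive reals λ₁, λ₂, the equation β = (1-e^{-λ₁β})(1-e^{-λ₂β}) has at most two solutions with β > 0. -/
/-!
Write `h = fixedPointGap a b`. Three positive solutions together with `t = 0`
would be four zeros of `h`, so by Rolle's theorem `h''` would have two zeros. But
`h''(t) = e^{-(a+b)t} ((a+b)² - a² e^{bt} - b² e^{at})` and the second factor is strictly
decreasing, so `h''` has at most one zero.
-/

open Real Set

theorem Set.exists_strictMono_fin_of_le_encard {α : Type*} [LinearOrder α] {s : Set α} {n : ℕ}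
    (hs : (n : ℕ∞) ≤ s.encard) : ∃ x : Fin n → α, StrictMono x ∧ ∀ i, x i ∈ s := by
  obtain ⟨t, hts, htn⟩ := exists_subset_encard_eq hs
  have ht := finite_of_encard_eq_coe htn
  have hcard : ht.toFinset.card = n := by
    rw [← ENat.natCast_inj, ← htn, ht.encard_eq_coe_toFinset_card]
  refine ⟨ht.toFinset.orderEmbOfFin hcard, (ht.toFinset.orderEmbOfFin hcard).strictMono,
    fun i => hts ?_⟩
  exact ht.mem_toFinset.1 (ht.toFinset.orderEmbOfFin_mem hcard i)

theorem exists_strictMono_zeros_of_hasDerivAt {f f' : ℝ → ℝ} (hf : ∀ t, HasDerivAt f (f' t) t)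
    {n : ℕ} {x : Fin (n + 1) → ℝ} (hx : StrictMono x) (hzero : ∀ i, f (x i) = 0) :
    ∃ y : Fin n → ℝ, StrictMono y ∧ ∀ i, f' (y i) = 0 := by
  have hcont : ContinuousOn f univ := fun t _ => (hf t).continuousAt.continuousWithinAt
  choose y hy hy0 using fun i : Fin n => exists_hasDerivAt_eq_zero
    (hx (Fin.castSucc_lt_succ (i := i))) (hcont.mono (subset_univ _))
    (by rw [hzero, hzero]) (fun t _ => hf t)
  refine ⟨y, fun i j hij => ?_, hy0⟩
  calc y i < x i.succ := (hy i).2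
    _ ≤ x j.castSucc := hx.monotone (Fin.succ_le_castSucc_iff.2 hij)
    _ < y j := (hy j).1

theorem hasDerivAt_exp_const_mul (c t : ℝ) :
    HasDerivAt (fun s => exp (c * s)) (c * exp (c * t)) t := by
  simpa [mul_comm] using ((hasDerivAt_id t).const_mul c).exp

noncomputable def fixedPointGap (a b t : ℝ) : ℝ := (1 - exp (-a * t)) * (1 - exp (-b * t)) - t

section FixedPointGap

variable (a b : ℝ)

theorem hasDerivAt_fixedPointGap (t : ℝ) :
    HasDerivAt (fixedPointGap a b)
      (a * exp (-a * t) + b * exp (-b * t) - (a + b) * exp (-(a + b) * t) - 1) t := by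
  have hexp : ∀ s, exp (-(a + b) * s) = exp (-a * s) * exp (-b * s) := by
    intro s; rw [← exp_add]; ring_nf
  have hgap : fixedPointGap a b =
      fun s => 1 - exp (-a * s) - exp (-b * s) + exp (-(a + b) * s) - s := by
    funext s; rw [fixedPointGap, hexp]; ring
  rw [hgap]
  exact (((((hasDerivAt_exp_const_mul (-a) t).const_sub 1).sub
    (hasDerivAt_exp_const_mul (-b) t)).add (hasDerivAt_exp_const_mul (-(a + b)) t)).sub
    (hasDerivAt_id t)).congr_deriv (by ring)

theorem hasDerivAt_fixedPointGap_deriv (t : ℝ) :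
    HasDerivAt (fun s => a * exp (-a * s) + b * exp (-b * s) - (a + b) * exp (-(a + b) * s) - 1)
      ((a + b) ^ 2 * exp (-(a + b) * t) - a ^ 2 * exp (-a * t) - b ^ 2 * exp (-b * t)) t :=
  (((((hasDerivAt_exp_const_mul (-a) t).const_mul a).add
    ((hasDerivAt_exp_const_mul (-b) t).const_mul b)).sub
    ((hasDerivAt_exp_const_mul (-(a + b)) t).const_mul (a + b))).sub_const 1).congr_deriv
    (by ring)

theorem fixedPointGap_deriv2_eq_exp_mul (t : ℝ) :
    (a + b) ^ 2 * exp (-(a + b) * t) - a ^ 2 * exp (-a * t) - b ^ 2 * exp (-b * t) =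
      exp (-(a + b) * t) * ((a + b) ^ 2 - a ^ 2 * exp (b * t) - b ^ 2 * exp (a * t)) := by
  have ha : exp (-(a + b) * t) * exp (b * t) = exp (-a * t) := by rw [← exp_add]; ring_nf
  have hb : exp (-(a + b) * t) * exp (a * t) = exp (-b * t) := by rw [← exp_add]; ring_nf
  linear_combination a ^ 2 * ha + b ^ 2 * hb

variable {a b}

theorem strictAnti_fixedPointGap_deriv2_factor (ha : 0 < a) (hb : 0 < b) :
    StrictAnti fun t => (a + b) ^ 2 - a ^ 2 * exp (b * t) - b ^ 2 * exp (a * t) := by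
  intro s t hst
  have hexp_b : exp (b * s) < exp (b * t) := exp_lt_exp.2 (by gcongr)
  have hexp_a : exp (a * s) < exp (a * t) := exp_lt_exp.2 (by gcongr)
  dsimp only
  nlinarith [mul_lt_mul_of_pos_left hexp_b (pow_pos ha 2),
    mul_lt_mul_of_pos_left hexp_a (pow_pos hb 2)]

theorem eq_of_fixedPointGap_deriv2_eq_zero (ha : 0 < a) (hb : 0 < b) {s t : ℝ}
    (hs : (a + b) ^ 2 * exp (-(a + b) * s) - a ^ 2 * exp (-a * s) - b ^ 2 * exp (-b * s) = 0)
    (ht : (a + b) ^ 2 * exp (-(a + b) * t) - a ^ 2 * exp (-a * t) - b ^ 2 * exp (-b * t) = 0) :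
    s = t := by
  rw [fixedPointGap_deriv2_eq_exp_mul, mul_eq_zero, or_iff_right (exp_ne_zero _)] at hs ht
  exact (strictAnti_fixedPointGap_deriv2_factor ha hb).injective (hs.trans ht.symm)

end FixedPointGap

theorem stmt_4 (lam1 lam2 : ℝ) (h1 : 0 < lam1) (h2 : 0 < lam2) :
    {β : ℝ | 0 < β ∧ β = (1 - Real.exp (-lam1 * β)) * (1 - Real.exp (-lam2 * β))}.encard ≤ 2 := by
  set S := {β : ℝ | 0 < β ∧ β = (1 - Real.exp (-lam1 * β)) * (1 - Real.exp (-lam2 * β))}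
  by_contra! hS
  have h4 : ((4 : ℕ) : ℕ∞) ≤ (insert 0 S).encard := by
    rw [encard_insert_of_notMem fun h => h.1.false]
    calc ((4 : ℕ) : ℕ∞) = 2 + 1 + 1 := by norm_num
      _ ≤ S.encard + 1 := by gcongr; exact Order.add_one_le_of_lt hS
  obtain ⟨x, hx, hxS⟩ := exists_strictMono_fin_of_le_encard h4
  have hzero : ∀ i, fixedPointGap lam1 lam2 (x i) = 0 := by
    intro i
    rcases hxS i with h | ⟨-, h⟩
    · simp [fixedPointGap, h]
    · rw [fixedPointGap, ← h, sub_self]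
  obtain ⟨y, hy, hy0⟩ :=
    exists_strictMono_zeros_of_hasDerivAt (hasDerivAt_fixedPointGap lam1 lam2) hx hzero
  obtain ⟨z, hz, hz0⟩ :=
    exists_strictMono_zeros_of_hasDerivAt (hasDerivAt_fixedPointGap_deriv lam1 lam2) hy hy0
  exact (hz Fin.zero_lt_one).ne (eq_of_fixedPointGap_deriv2_eq_zero h1 h2 (hz0 0) (hz0 1))
end

section
/- Let λ₁, λ₂ > 0 and let β > 0 satisfy β = (1-e^{-λ₁β})(1-e^{-λ₂β}). Then λ₁(1-e^{-λ₂β}) > 1 and λ₂(1-e^{-λ₁β}) > 1. -/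
theorem stmt_5 (lam1 lam2 β : ℝ) (h1 : 0 < lam1) (h2 : 0 < lam2) (hβ : 0 < β)
    (hfix : β = (1 - Real.exp (-lam1 * β)) * (1 - Real.exp (-lam2 * β))) :
    1 < lam1 * (1 - Real.exp (-lam2 * β)) ∧ 1 < lam2 * (1 - Real.exp (-lam1 * β)) := by
  set a := 1 - Real.exp (-lam1 * β) with ha
  set b := 1 - Real.exp (-lam2 * β) with hb
  have ha0 : 0 < a := by
    have : Real.exp (-lam1 * β) < 1 := by
      rw [Real.exp_lt_one_iff]; nlinarith
    linarith
  have hb0 : 0 < b := by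
    have : Real.exp (-lam2 * β) < 1 := by
      rw [Real.exp_lt_one_iff]; nlinarith
    linarith
  have haβ : a < lam1 * β := by
    have := Real.add_one_lt_exp (x := -lam1 * β) (by nlinarith)
    simp only [ha]; linarith
  have hbβ : b < lam2 * β := by
    have := Real.add_one_lt_exp (x := -lam2 * β) (by nlinarith)
    simp only [hb]; linarith
  constructor
  · nlinarith
  · nlinarith
end

section
/- Let λ₁, λ₂ > 0 with e·λ₁·λ₂ · ε < 1 and 0 < ε. Then the sum over k from 3 to ⌊εn⌋ of C(n,k)·k^{2k-4}·(λ₁/n)^{k-1}·(λ₂/n)^{k-1} tends to 0 as n → ∞. -/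
open Nat Finset Filter

lemma choose_bound (n k : ℕ) (hk : 0 < k) :
    (n.choose k : ℝ) ≤ (Real.exp 1 * n / k) ^ k := by
  have h1 : (n.choose k : ℝ) ≤ (n : ℝ) ^ k / (k ! : ℝ) := Nat.choose_le_pow_div k n
  have hkf : (0:ℝ) < (k ! : ℝ) := by positivity
  have hkk : (0:ℝ) < (k:ℝ) := by exact_mod_cast hk
  have h2 : ((k:ℝ)) ^ k / (k ! : ℝ) ≤ Real.exp 1 ^ k := by
    have := Real.pow_div_factorial_le_exp (x := (k:ℝ)) hkk.le k
    calc ((k:ℝ)) ^ k / (k ! : ℝ) ≤ Real.exp k := this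
      _ = Real.exp 1 ^ k := by rw [← Real.exp_nat_mul]; ring_nf
  -- k^k ≤ e^k * k!
  have h3 : ((k:ℝ)) ^ k ≤ Real.exp 1 ^ k * (k ! : ℝ) := by
    rw [div_le_iff₀ hkf] at h2; exact h2
  calc (n.choose k : ℝ) ≤ (n : ℝ) ^ k / (k ! : ℝ) := h1
    _ ≤ (Real.exp 1 * n / k) ^ k := by
        rw [div_pow, div_le_div_iff₀ hkf (by positivity), mul_pow]
        calc (n:ℝ)^k * (k:ℝ)^k ≤ (n:ℝ)^k * (Real.exp 1 ^ k * (k ! : ℝ)) := by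
              apply mul_le_mul_of_nonneg_left h3 (by positivity)
          _ = Real.exp 1 ^ k * (n:ℝ)^k * (k ! : ℝ) := by ring

lemma term_bound (lam1 lam2 ε N K c : ℝ) (m : ℕ) (h1 : 0 < lam1) (h2 : 0 < lam2)
    (hε : 0 < ε) (hN : 1 ≤ N) (hK : 3 ≤ K) (hKN : K ≤ ε * N)
    (hc : 0 ≤ c) (hcb : c ≤ (Real.exp 1 * N / K) ^ (m + 3)) :
    c * K ^ (2 * m + 2) * (lam1 / N) ^ (m + 2) * (lam2 / N) ^ (m + 2) ≤
      (Real.exp 1 * lam1 * lam2 * ε) ^ (m + 3) / (lam1 * lam2 * ε ^ 3 * N) := by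
  have hN0 : (0:ℝ) < N := lt_of_lt_of_le one_pos hN
  have hK0 : (0:ℝ) < K := by linarith
  have he : (0:ℝ) < Real.exp 1 := Real.exp_pos 1
  have key : K ^ (2 * m + 2) ≤ ε ^ m * N ^ m * K ^ (m + 3) := by
    have hKm : K ^ m ≤ (ε * N) ^ m := pow_le_pow_left₀ hK0.le hKN m
    calc K ^ (2 * m + 2) = K ^ (m + 2) * K ^ m := by ring
      _ ≤ K ^ (m + 2) * (ε * N) ^ m := by
          apply mul_le_mul_of_nonneg_left hKm (by positivity)
      _ ≤ (K ^ (m + 2) * K) * (ε * N) ^ m := by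
          apply mul_le_mul_of_nonneg_right _ (by positivity)
          nlinarith [pow_pos hK0 (m + 2)]
      _ = ε ^ m * N ^ m * K ^ (m + 3) := by rw [mul_pow]; ring
  have main : (Real.exp 1 * N) ^ (m + 3) * K ^ (2 * m + 2) * lam1 ^ (m + 2) * lam2 ^ (m + 2)
      * (lam1 * lam2 * ε ^ 3 * N) ≤
      (Real.exp 1 * lam1 * lam2 * ε) ^ (m + 3) * (K ^ (m + 3) * (N ^ (m + 2) * N ^ (m + 2))) := by
    have := mul_le_mul_of_nonneg_left key
      (show (0:ℝ) ≤ Real.exp 1 ^ (m+3) * lam1 ^ (m+3) * lam2 ^ (m+3) * ε ^ 3 * N ^ (m+4)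
        by positivity)
    calc (Real.exp 1 * N) ^ (m + 3) * K ^ (2 * m + 2) * lam1 ^ (m + 2) * lam2 ^ (m + 2)
        * (lam1 * lam2 * ε ^ 3 * N)
        = (Real.exp 1 ^ (m+3) * lam1 ^ (m+3) * lam2 ^ (m+3) * ε ^ 3 * N ^ (m+4))
            * K ^ (2 * m + 2) := by rw [mul_pow]; ring
      _ ≤ (Real.exp 1 ^ (m+3) * lam1 ^ (m+3) * lam2 ^ (m+3) * ε ^ 3 * N ^ (m+4))
            * (ε ^ m * N ^ m * K ^ (m + 3)) := this
      _ = (Real.exp 1 * lam1 * lam2 * ε) ^ (m + 3) * (K ^ (m + 3) * (N ^ (m + 2) * N ^ (m + 2)))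
          := by rw [mul_pow, mul_pow, mul_pow]; ring
  calc c * K ^ (2 * m + 2) * (lam1 / N) ^ (m + 2) * (lam2 / N) ^ (m + 2)
      ≤ (Real.exp 1 * N / K) ^ (m + 3) * K ^ (2 * m + 2) * (lam1 / N) ^ (m + 2)
        * (lam2 / N) ^ (m + 2) := by
        apply mul_le_mul_of_nonneg_right _ (by positivity)
        apply mul_le_mul_of_nonneg_right _ (by positivity)
        exact mul_le_mul_of_nonneg_right hcb (by positivity)
    _ = ((Real.exp 1 * N) ^ (m + 3) * K ^ (2 * m + 2) * lam1 ^ (m + 2) * lam2 ^ (m + 2))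
        / (K ^ (m + 3) * (N ^ (m + 2) * N ^ (m + 2))) := by
        rw [div_pow, div_pow, div_pow]; ring
    _ ≤ (Real.exp 1 * lam1 * lam2 * ε) ^ (m + 3) / (lam1 * lam2 * ε ^ 3 * N) := by
        rw [div_le_div_iff₀ (by positivity) (by positivity)]
        exact main

theorem stmt_14 (lam1 lam2 ε : ℝ) (h1 : 0 < lam1) (h2 : 0 < lam2) (hε : 0 < ε)
    (hsmall : Real.exp 1 * lam1 * lam2 * ε < 1) :
    Filter.Tendsto (fun n : ℕ =>
        ∑ k ∈ Finset.Icc 3 ⌊ε * n⌋₊,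
          (n.choose k : ℝ) * (k : ℝ) ^ (2 * k - 4) *
            (lam1 / n) ^ (k - 1) * (lam2 / n) ^ (k - 1))
      Filter.atTop (nhds 0) := by
  set q := Real.exp 1 * lam1 * lam2 * ε with hq
  have hq0 : 0 < q := by positivity
  set C := (1 - q)⁻¹ / (lam1 * lam2 * ε ^ 3) with hC
  apply squeeze_zero' (g := fun n : ℕ => C / n)
  · filter_upwards with n
    apply Finset.sum_nonneg
    intro k _
    have : (0:ℝ) ≤ lam1 / n := by positivity
    have : (0:ℝ) ≤ lam2 / n := by positivity
    positivity
  · filter_upwards [eventually_ge_atTop 1] with n hn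
    have hN0 : (0:ℝ) < n := by exact_mod_cast hn
    have hN1 : (1:ℝ) ≤ n := by exact_mod_cast hn
    have step1 : ∀ k ∈ Finset.Icc 3 ⌊ε * n⌋₊,
        (n.choose k : ℝ) * (k : ℝ) ^ (2 * k - 4) *
          (lam1 / n) ^ (k - 1) * (lam2 / n) ^ (k - 1) ≤
        q ^ k / (lam1 * lam2 * ε ^ 3 * n) := by
      intro k hk
      rw [Finset.mem_Icc] at hk
      obtain ⟨hk3, hkM⟩ := hk
      obtain ⟨m, rfl⟩ : ∃ m, k = m + 3 := ⟨k - 3, by omega⟩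
      have e1 : 2 * (m + 3) - 4 = 2 * m + 2 := by omega
      have e2 : (m + 3) - 1 = m + 2 := by omega
      rw [e1, e2]
      have hKN : ((m + 3 : ℕ) : ℝ) ≤ ε * n := by
        rw [← Nat.le_floor_iff (by positivity)]; exact hkM
      have hK3 : (3:ℝ) ≤ ((m + 3 : ℕ) : ℝ) := by
        have : (3:ℕ) ≤ m + 3 := by omega
        exact_mod_cast this
      exact term_bound lam1 lam2 ε n ((m + 3 : ℕ) : ℝ) (n.choose (m+3) : ℝ) m h1 h2 hε hN1
        hK3 hKN (by positivity) (choose_bound n (m+3) (by omega))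
    calc (∑ k ∈ Finset.Icc 3 ⌊ε * n⌋₊,
          (n.choose k : ℝ) * (k : ℝ) ^ (2 * k - 4) *
            (lam1 / n) ^ (k - 1) * (lam2 / n) ^ (k - 1))
        ≤ ∑ k ∈ Finset.Icc 3 ⌊ε * n⌋₊, q ^ k / (lam1 * lam2 * ε ^ 3 * n) :=
          Finset.sum_le_sum step1
      _ = (∑ k ∈ Finset.Icc 3 ⌊ε * n⌋₊, q ^ k) / (lam1 * lam2 * ε ^ 3 * n) := by
          rw [Finset.sum_div]
      _ ≤ (1 - q)⁻¹ / (lam1 * lam2 * ε ^ 3 * n) := by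
          have hsum : (∑ k ∈ Finset.Icc 3 ⌊ε * n⌋₊, q ^ k) ≤ (1 - q)⁻¹ := by
            have hg := hasSum_geometric_of_lt_one hq0.le hsmall
            calc (∑ k ∈ Finset.Icc 3 ⌊ε * n⌋₊, q ^ k)
                ≤ ∑' k : ℕ, q ^ k := Summable.sum_le_tsum _ (fun i _ => by positivity) hg.summable
              _ = (1 - q)⁻¹ := hg.tsum_eq
          gcongr
      _ = C / n := by rw [hC, div_div]
  · exact tendsto_const_div_atTop_nhds_zero_nat C
end

section
/- Let W' be a finite set of size m and consider the Erdős–Rényi random graph G(W', p) with p = n^{-4/5}, m ≤ n^{3/5}. The probability that every vertex of W' has positive degree is at most (e·m·n^{-4/5})^{m/2} ≤ n^{-m/12} for n sufficiently large. -/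
/-
If every vertex of an `m`-vertex graph has positive degree, the graph has at least `⌈m/2⌉` edges,
since each edge covers at most two vertices. A union bound over the `C(C(m,2), ⌈m/2⌉)` edge sets of
that size, each present with probability `p^⌈m/2⌉`, together with `C(N, k) ≤ (eN/k)^k` and
`C(m,2) ≤ m⌈m/2⌉`, bounds the probability by `(e m p)^⌈m/2⌉ ≤ (e m p)^(m/2)`. With
`p = n^(-4/5)`, `m ≤ n^(3/5)` and `e ≤ 3 ≤ n^(1/30)` the base is at most `n^(-1/6)`.
-/

open MeasureTheory ENNReal Finset

theorem Nat.cast_choose_le_exp_one_mul_div_pow (N k : ℕ) :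
    (N.choose k : ℝ) ≤ (Real.exp 1 * N / k) ^ k := by
  rcases k.eq_zero_or_pos with rfl | hk
  · simp
  have hk' : (0 : ℝ) < k := by exact_mod_cast hk
  have hkk : (k : ℝ) ^ k / k.factorial ≤ Real.exp 1 ^ k := by
    simpa [← Real.exp_nat_mul] using Real.pow_div_factorial_le_exp (k : ℝ) hk'.le k
  calc (N.choose k : ℝ) ≤ N ^ k / k.factorial := Nat.choose_le_pow_div k N
    _ = (N / k) ^ k * ((k : ℝ) ^ k / k.factorial) := by
        rw [div_pow]; field_simp
    _ ≤ (N / k) ^ k * Real.exp 1 ^ k := by gcongr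
    _ = (Real.exp 1 * N / k) ^ k := by rw [← mul_pow]; ring_nf

theorem cast_choose_choose_two_le (m : ℕ) :
    ((m.choose 2).choose ((m + 1) / 2) : ℝ) ≤ (Real.exp 1 * m) ^ ((m + 1) / 2) := by
  set k := (m + 1) / 2
  rcases k.eq_zero_or_pos with hk | hk
  · simp [hk]
  have hN : (m.choose 2 : ℝ) ≤ m * k := by
    have : m.choose 2 ≤ m * k := by
      rw [Nat.choose_two_right]
      exact Nat.div_le_of_le_mul (by rw [mul_left_comm]; gcongr; omega)
    exact_mod_cast this
  calc _ ≤ (Real.exp 1 * (m.choose 2 : ℕ) / k) ^ k := Nat.cast_choose_le_exp_one_mul_div_pow _ _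
    _ ≤ (Real.exp 1 * (m * k) / k) ^ k := by gcongr
    _ = (Real.exp 1 * m) ^ k := by field_simp

theorem exp_one_mul_mul_rpow_le {n m : ℕ} (hn : 3 ^ 30 ≤ n)
    (hm : (m : ℝ) ≤ (n : ℝ) ^ ((3 : ℝ) / 5)) :
    Real.exp 1 * m * (n : ℝ) ^ (-(4 : ℝ) / 5) ≤ (n : ℝ) ^ (-(1 : ℝ) / 6) := by
  have hn0 : (0 : ℝ) < n := by positivity
  have hexp : Real.exp 1 ≤ (n : ℝ) ^ ((1 : ℝ) / 30) :=
    calc Real.exp 1 ≤ 3 := Real.exp_one_lt_three.le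
      _ = ((3 : ℝ) ^ 30) ^ ((1 : ℝ) / 30) := by
          rw [← Real.rpow_natCast, ← Real.rpow_mul (by norm_num)]; norm_num
      _ ≤ (n : ℝ) ^ ((1 : ℝ) / 30) := by gcongr; exact_mod_cast hn
  calc _ ≤ (n : ℝ) ^ ((1 : ℝ) / 30) * (n : ℝ) ^ ((3 : ℝ) / 5) * (n : ℝ) ^ (-(4 : ℝ) / 5) := by
        gcongr
    _ = (n : ℝ) ^ (-(1 : ℝ) / 6) := by
        rw [← Real.rpow_add hn0, ← Real.rpow_add hn0]; norm_num

theorem card_le_two_mul_card_of_forall_exists_mem {α ι : Type*} [Fintype α] [DecidableEq α]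
    (e : ι → Sym2 α) (F : Finset ι) (hF : ∀ v, ∃ i ∈ F, v ∈ e i) :
    Fintype.card α ≤ 2 * #F := by
  have hcover : (univ : Finset α) ⊆ F.biUnion fun i => (e i).toFinset := by
    intro v _
    obtain ⟨i, hi, hv⟩ := hF v
    exact mem_biUnion.2 ⟨i, hi, Sym2.mem_toFinset.2 hv⟩
  calc Fintype.card α ≤ #(F.biUnion fun i => (e i).toFinset) := card_le_card hcover
    _ ≤ ∑ i ∈ F, #(e i).toFinset := card_biUnion_le
    _ ≤ ∑ _i ∈ F, 2 := sum_le_sum fun i _ => by rw [Sym2.card_toFinset]; split_ifs <;> norm_num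
    _ = 2 * #F := by rw [sum_const, smul_eq_mul, mul_comm]

section BernoulliProduct

variable {ι : Type*} [Fintype ι] (q : NNReal) (hq : q ≤ 1)

theorem pi_bernoulli_forall_mem_eq_true (S : Finset ι) :
    Measure.pi (fun _ : ι => (PMF.bernoulli q hq).toMeasure) {ω | ∀ i ∈ S, ω i = true}
      = (q : ℝ≥0∞) ^ #S := by
  classical
  have hS : {ω : ι → Bool | ∀ i ∈ S, ω i = true}
      = Set.univ.pi fun i => if i ∈ S then {true} else Set.univ := by
    ext ω
    simp only [Set.mem_ofPred_eq, Set.mem_pi, Set.mem_univ, true_imp_iff]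
    refine forall_congr' fun i => ?_
    split_ifs <;> simp [*]
  rw [hS, Measure.pi_pi]
  calc _ = ∏ i, if i ∈ S then (q : ℝ≥0∞) else 1 := by
        refine prod_congr rfl fun i _ => ?_
        split_ifs
        · simp [PMF.bernoulli_apply]
        · exact measure_univ
    _ = (q : ℝ≥0∞) ^ #S := by rw [prod_ite_mem, univ_inter, prod_const]

theorem pi_bernoulli_forall_exists_mem_le {α : Type*} [Fintype α] [DecidableEq α]
    (e : ι → Sym2 α) :
    (Measure.pi (fun _ : ι => (PMF.bernoulli q hq).toMeasure)
        {ω | ∀ v : α, ∃ i, v ∈ e i ∧ ω i = true}).toReal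
      ≤ (Fintype.card ι).choose ((Fintype.card α + 1) / 2)
          * (q : ℝ) ^ ((Fintype.card α + 1) / 2) := by
  classical
  set k := (Fintype.card α + 1) / 2
  have hsub : {ω : ι → Bool | ∀ v : α, ∃ i, v ∈ e i ∧ ω i = true}
      ⊆ ⋃ S ∈ powersetCard k univ, {ω | ∀ i ∈ S, ω i = true} := by
    intro ω hω
    have hcard : k ≤ #{i | ω i = true} := by
      have := card_le_two_mul_card_of_forall_exists_mem e {i | ω i = true} fun v => by
        simpa [and_comm] using hω v
      omega
    obtain ⟨S, hS, hSk⟩ := exists_subset_card_eq hcard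
    exact Set.mem_biUnion (mem_powersetCard.2 ⟨subset_univ S, hSk⟩) fun i hi => by
      simpa using hS hi
  have hle : Measure.pi (fun _ : ι => (PMF.bernoulli q hq).toMeasure)
        {ω | ∀ v : α, ∃ i, v ∈ e i ∧ ω i = true}
      ≤ (Fintype.card ι).choose k * (q : ℝ≥0∞) ^ k :=
    calc _ ≤ ∑ S ∈ powersetCard k univ,
          Measure.pi (fun _ : ι => (PMF.bernoulli q hq).toMeasure) {ω | ∀ i ∈ S, ω i = true} :=
          (measure_mono hsub).trans (measure_biUnion_finset_le _ _)
      _ = (Fintype.card ι).choose k * (q : ℝ≥0∞) ^ k := by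
          rw [sum_congr rfl fun S hS => by
            rw [pi_bernoulli_forall_mem_eq_true, (mem_powersetCard.1 hS).2]]
          simp [card_powersetCard]
  simpa using toReal_mono (by finiteness) hle

end BernoulliProduct

open MeasureTheory ENNReal in
theorem stmt_18 :
    ∃ N : ℕ, ∀ n : ℕ, N ≤ n → ∀ m : ℕ, 1 ≤ m → (m : ℝ) ≤ (n : ℝ) ^ ((3:ℝ)/5) →
      ∀ hp : (((n : ℝ≥0∞) ^ (-(4:ℝ)/5)) ≤ 1),
        ((Measure.pi (fun _ : {e : Sym2 (Fin m) // ¬ e.IsDiag} =>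
              (PMF.bernoulli ((n : ℝ≥0∞) ^ (-(4:ℝ)/5)).toNNReal
                (by simpa using ENNReal.toNNReal_mono ENNReal.one_ne_top hp)).toMeasure))
            {ω : {e : Sym2 (Fin m) // ¬ e.IsDiag} → Bool |
              ∀ v : Fin m, ∃ e, v ∈ e.1 ∧ ω e = true}).toReal
          ≤ (Real.exp 1 * m * (n : ℝ) ^ (-(4:ℝ)/5)) ^ ((m : ℝ)/2) ∧
        (Real.exp 1 * m * (n : ℝ) ^ (-(4:ℝ)/5)) ^ ((m : ℝ)/2) ≤ (n : ℝ) ^ (-(m : ℝ)/12) := by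
  refine ⟨3 ^ 30, fun n hn m _ hmn hp => ?_⟩
  have hn0 : (0 : ℝ) < n := by positivity
  set k := (m + 1) / 2
  set x := Real.exp 1 * m * (n : ℝ) ^ (-(4 : ℝ) / 5)
  have hx : x ≤ (n : ℝ) ^ (-(1 : ℝ) / 6) := exp_one_mul_mul_rpow_le hn hmn
  have hx0 : 0 ≤ x := by positivity
  have hx1 : x ≤ 1 :=
    hx.trans (Real.rpow_le_one_of_one_le_of_nonpos (by exact_mod_cast hn0) (by norm_num))
  have hq : (((n : ℝ≥0∞) ^ (-(4 : ℝ) / 5)).toNNReal : ℝ) = (n : ℝ) ^ (-(4 : ℝ) / 5) := by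
    simp
  constructor
  · calc _ ≤ _ := pi_bernoulli_forall_exists_mem_le _ _ Subtype.val
      _ = ((m.choose 2).choose k : ℝ) * ((n : ℝ) ^ (-(4 : ℝ) / 5)) ^ k := by
          rw [Sym2.card_subtype_not_diag, Fintype.card_fin, hq]
      _ ≤ (Real.exp 1 * m) ^ k * ((n : ℝ) ^ (-(4 : ℝ) / 5)) ^ k := by
          gcongr; exact cast_choose_choose_two_le m
      _ = x ^ (k : ℝ) := by rw [Real.rpow_natCast, ← mul_pow]
      _ ≤ x ^ ((m : ℝ) / 2) := by
          refine Real.rpow_le_rpow_of_exponent_ge' hx0 hx1 (by positivity) ?_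
          rw [div_le_iff₀ two_pos]; exact_mod_cast (by omega : m ≤ k * 2)
  · calc x ^ ((m : ℝ) / 2) ≤ ((n : ℝ) ^ (-(1 : ℝ) / 6)) ^ ((m : ℝ) / 2) := by gcongr
      _ = (n : ℝ) ^ (-(m : ℝ) / 12) := by rw [← Real.rpow_mul hn0.le]; ring_nf
end
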